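/- Let d ≥ 2 and 1 ≤ p < d/(d-2) (no upper restriction when d = 2). The Bessel potential kernel G(x) = (1/(4π)) ∫₀^∞ exp(-π|x|²/(4s) - s/(4π)) s^{(2-d)/2} (ds/s) belongs to L^p(ℝ^d), and ‖G‖_{L^p(ℝ^d)} ≤ (2^{d(2/p - 1)} / (p^{d/(2p)} π^{(d/2)(1 - 1/p)})) · Γ(1 + (d - dp)/(2p)), where Γ is the Gamma function (the argument 1 + (d-dp)/(2p) is positive precisely because p < d/(d-2)). -/

import Mathlib

open MeasureTheory

/-- The Bessel potential kernel on `ℝ^d`, `d ≥ 2`: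
`G(x) = (1/(4π)) ∫₀^∞ exp(-π|x|²/(4s) - s/(4π)) s^{(2-d)/2} (ds/s)`. -/
noncomputable def besselKernel (d : ℕ) (x : EuclideanSpace ℝ (Fin d)) : ℝ :=
  (1 / (4 * Real.pi)) * ∫ s in Set.Ioi (0 : ℝ),
    Real.exp (-Real.pi * ‖x‖ ^ 2 / (4 * s) - s / (4 * Real.pi)) * s ^ ((2 - (d : ℝ)) / 2) / s

/-!
Write `G = (4π)⁻¹ ∫₀^∞ f(x, s) ds` and split `f = F^{1/p} w^{1-1/p}` with the weight
`w(s) = s^{a-1} e^{-s/(4π)}`, `a = 1 + (d - dp)/(2p)`, and `F = w(s) s^{-d/2} e^{-pπ|x|²/(4s)}`.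
Hölder's inequality in `s` gives `G(x)^p ≤ (4π)^{-p} (∫ w)^{p-1} ∫ F(x, s) ds`. Integrating in `x`
first, the Gaussian contributes `(4s/p)^{d/2}`, which cancels `s^{-d/2}`, so
`‖G‖_p^p ≤ (4π)^{-p} (4/p)^{d/2} (∫ w)^p` with `∫ w = (4π)^a Γ(a)`; the condition `p(d-2) < d` is
`a > 0`.
-/

open Real Set Module

lemma lintegral_rpow_mul_exp_neg_mul_Ioi {a r : ℝ} (ha : 0 < a) (hr : 0 < r) :
    ∫⁻ t in Ioi (0 : ℝ), ENNReal.ofReal (t ^ (a - 1) * exp (-(r * t))) =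
      ENNReal.ofReal ((1 / r) ^ a * Gamma a) := by
  have h := integral_rpow_mul_exp_neg_mul_Ioi ha hr
  rw [← h, ofReal_integral_eq_lintegral_ofReal]
  · exact Integrable.of_integral_ne_zero (by rw [h]; positivity)
  · filter_upwards [self_mem_ae_restrict measurableSet_Ioi] with t ht
    exact mul_nonneg (rpow_nonneg (le_of_lt ht) _) (exp_pos _).le

lemma lintegral_exp_neg_pi_mul_sq_norm_div {V : Type*} [NormedAddCommGroup V]
    [InnerProductSpace ℝ V] [FiniteDimensional ℝ V] [MeasurableSpace V] [BorelSpace V]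
    {t : ℝ} (ht : 0 < t) :
    ∫⁻ v : V, ENNReal.ofReal (exp (-π * ‖v‖ ^ 2 / t)) =
      ENNReal.ofReal (t ^ (finrank ℝ V / 2 : ℝ)) := by
  have h := GaussianFourier.integral_rexp_neg_mul_sq_norm (V := V) (div_pos pi_pos ht)
  rw [div_div_cancel₀ pi_ne_zero] at h
  simp_rw [neg_mul, neg_div, mul_div_right_comm, ← neg_mul]
  rw [← h, ofReal_integral_eq_lintegral_ofReal]
  · exact Integrable.of_integral_ne_zero (by rw [h]; positivity)
  · exact ae_of_all _ fun v => (exp_pos _).le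

lemma integrable_and_integral_le_of_lintegral_ofReal_le {α : Type*} [MeasurableSpace α]
    {μ : Measure α} {g : α → ℝ} {B : ℝ} (hg : AEStronglyMeasurable g μ) (hg0 : 0 ≤ᵐ[μ] g)
    (hB : 0 ≤ B) (h : ∫⁻ a, ENNReal.ofReal (g a) ∂μ ≤ ENNReal.ofReal B) :
    Integrable g μ ∧ ∫ a, g a ∂μ ≤ B :=
  ⟨(lintegral_ofReal_ne_top_iff_integrable hg hg0).1 (ne_top_of_le_ne_top ENNReal.ofReal_ne_top h),
    by rw [integral_eq_lintegral_of_nonneg_ae hg0 hg]; exact ENNReal.toReal_le_of_le_ofReal hB h⟩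

noncomputable def besselIntegrand (d : ℕ) (x : EuclideanSpace ℝ (Fin d)) (s : ℝ) : ℝ :=
  exp (-π * ‖x‖ ^ 2 / (4 * s) - s / (4 * π)) * s ^ ((2 - (d : ℝ)) / 2) / s

noncomputable def besselWeight (d : ℕ) (p s : ℝ) : ℝ :=
  s ^ (((d : ℝ) - d * p) / (2 * p)) * exp (-((4 * π)⁻¹ * s))

@[fun_prop]
lemma measurable_besselWeight (d : ℕ) (p : ℝ) : Measurable (besselWeight d p) := by
  unfold besselWeight
  fun_prop

lemma besselWeight_nonneg (d : ℕ) {p s : ℝ} (hs : 0 ≤ s) : 0 ≤ besselWeight d p s := by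
  unfold besselWeight
  positivity

lemma measurable_besselIntegrand (d : ℕ) : Measurable (Function.uncurry (besselIntegrand d)) := by
  unfold besselIntegrand Function.uncurry
  fun_prop

lemma measurable_besselKernel (d : ℕ) : Measurable (besselKernel d) :=
  measurable_const.mul
    (measurable_besselIntegrand d).stronglyMeasurable.integral_prod_right'.measurable

lemma besselIntegrand_eq_rpow_mul_rpow {d : ℕ} {p s : ℝ} (hp : 0 < p) (hs : 0 < s)
    (x : EuclideanSpace ℝ (Fin d)) :
    besselIntegrand d x s =
      (besselWeight d p s * s ^ (-(d : ℝ) / 2) * exp (-π * ‖x‖ ^ 2 / (4 * s / p))) ^ (1 / p) *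
        besselWeight d p s ^ (1 - 1 / p) := by
  unfold besselIntegrand besselWeight
  rw [← exp_log hs]
  simp only [← exp_mul, ← exp_add, ← exp_sub]
  congr 1
  field_simp
  ring

lemma lintegral_besselWeight {d : ℕ} {p : ℝ} (ha : 0 < 1 + ((d : ℝ) - d * p) / (2 * p)) :
    ∫⁻ s in Ioi (0 : ℝ), ENNReal.ofReal (besselWeight d p s) =
      ENNReal.ofReal ((4 * π) ^ (1 + ((d : ℝ) - d * p) / (2 * p)) *
        Gamma (1 + ((d : ℝ) - d * p) / (2 * p))) := by
  have h := lintegral_rpow_mul_exp_neg_mul_Ioi ha (inv_pos.2 (by positivity : 0 < 4 * π))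
  rwa [add_sub_cancel_left, one_div, inv_inv] at h

lemma lintegral_besselIntegrand_le {d : ℕ} {p : ℝ} (hp : 1 ≤ p)
    (x : EuclideanSpace ℝ (Fin d)) :
    ∫⁻ s in Ioi (0 : ℝ), ENNReal.ofReal (besselIntegrand d x s) ≤
      (∫⁻ s in Ioi (0 : ℝ), ENNReal.ofReal
          (besselWeight d p s * s ^ (-(d : ℝ) / 2) * exp (-π * ‖x‖ ^ 2 / (4 * s / p)))) ^ (1 / p) *
        (∫⁻ s in Ioi (0 : ℝ), ENNReal.ofReal (besselWeight d p s)) ^ (1 - 1 / p) := by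
  have hp0 : 0 < p := by linarith
  have hq : 0 ≤ 1 - 1 / p := by rw [sub_nonneg, div_le_one hp0]; exact hp
  calc ∫⁻ s in Ioi (0 : ℝ), ENNReal.ofReal (besselIntegrand d x s)
      = ∫⁻ s in Ioi (0 : ℝ), ENNReal.ofReal
            (besselWeight d p s * s ^ (-(d : ℝ) / 2) * exp (-π * ‖x‖ ^ 2 / (4 * s / p))) ^ (1 / p) *
          ENNReal.ofReal (besselWeight d p s) ^ (1 - 1 / p) := by
        refine setLIntegral_congr_fun measurableSet_Ioi fun s (hs : 0 < s) => ?_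
        have hW := besselWeight_nonneg d (p := p) hs.le
        rw [ENNReal.ofReal_rpow_of_nonneg (by positivity) (by positivity),
          ENNReal.ofReal_rpow_of_nonneg hW hq, ← ENNReal.ofReal_mul (by positivity),
          besselIntegrand_eq_rpow_mul_rpow hp0 hs]
    _ ≤ _ := ENNReal.lintegral_mul_norm_pow_le (by fun_prop) (by fun_prop) (by positivity) hq
          (by ring)

lemma lintegral_lintegral_besselWeight_mul_gaussian {d : ℕ} {p : ℝ} (hp : 0 < p) :
    ∫⁻ x : EuclideanSpace ℝ (Fin d), ∫⁻ s in Ioi (0 : ℝ), ENNReal.ofReal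
        (besselWeight d p s * s ^ (-(d : ℝ) / 2) * exp (-π * ‖x‖ ^ 2 / (4 * s / p))) =
      ENNReal.ofReal ((4 / p) ^ ((d : ℝ) / 2)) *
        ∫⁻ s in Ioi (0 : ℝ), ENNReal.ofReal (besselWeight d p s) := by
  rw [lintegral_lintegral_swap (by fun_prop), ← lintegral_const_mul' _ _ ENNReal.ofReal_ne_top]
  refine setLIntegral_congr_fun measurableSet_Ioi fun s (hs : 0 < s) => ?_
  have hW := besselWeight_nonneg d (p := p) hs.le
  have hs' : s ^ (-(d : ℝ) / 2) * (4 * s / p) ^ ((d : ℝ) / 2) = (4 / p) ^ ((d : ℝ) / 2) := by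
    rw [mul_div_right_comm, mul_rpow (by positivity) hs.le, neg_div, rpow_neg hs.le]
    field_simp
  simp_rw [ENNReal.ofReal_mul (by positivity : 0 ≤ besselWeight d p s * s ^ (-(d : ℝ) / 2))]
  rw [lintegral_const_mul' _ _ ENNReal.ofReal_ne_top,
    lintegral_exp_neg_pi_mul_sq_norm_div (by positivity), finrank_euclideanSpace_fin,
    ← ENNReal.ofReal_mul (by positivity), ← ENNReal.ofReal_mul (by positivity), mul_assoc, hs',
    mul_comm]

lemma ofReal_abs_besselKernel_le (d : ℕ) (x : EuclideanSpace ℝ (Fin d)) :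
    ENNReal.ofReal |besselKernel d x| ≤
      ENNReal.ofReal (1 / (4 * π)) *
        ∫⁻ s in Ioi (0 : ℝ), ENNReal.ofReal (besselIntegrand d x s) := by
  have hG : besselKernel d x = 1 / (4 * π) * ∫ s in Ioi (0 : ℝ), besselIntegrand d x s := rfl
  rw [hG, abs_mul, ENNReal.ofReal_mul (abs_nonneg _), abs_of_pos (by positivity),
    ← enorm_eq_ofReal_abs]
  gcongr
  refine (enorm_integral_le_lintegral_enorm _).trans_eq
    (setLIntegral_congr_fun measurableSet_Ioi fun s (hs : 0 < s) => ?_)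
  rw [enorm_eq_ofReal_abs, abs_of_nonneg (by unfold besselIntegrand; positivity)]

lemma besselKernel_Lp_const_eq {d : ℕ} {p : ℝ} (hp : 0 < p) :
    1 / (4 * π) * (4 / p) ^ ((d : ℝ) / (2 * p)) *
        ((4 * π) ^ (1 + ((d : ℝ) - d * p) / (2 * p)) * Gamma (1 + ((d : ℝ) - d * p) / (2 * p))) =
      2 ^ ((d : ℝ) * (2 / p - 1)) / (p ^ ((d : ℝ) / (2 * p)) * π ^ (((d : ℝ) / 2) * (1 - 1 / p))) *
        Gamma (1 + ((d : ℝ) - d * p) / (2 * p)) := by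
  have h4 : Real.log 4 = 2 * Real.log 2 := by
    rw [show (4 : ℝ) = 2 ^ 2 by norm_num, Real.log_pow, Nat.cast_ofNat]
  rw [← mul_assoc]
  congr 1
  rw [rpow_def_of_pos (by positivity : (0 : ℝ) < 4 * π),
    rpow_def_of_pos (by positivity : 0 < 4 / p), rpow_def_of_pos hp, rpow_def_of_pos pi_pos,
    rpow_def_of_pos two_pos,
    Real.log_mul (by norm_num) pi_ne_zero, Real.log_div (by norm_num) hp.ne', h4,
    one_div, ← exp_log (by positivity : (0 : ℝ) < 4 * π), ← exp_neg,
    Real.log_mul (by norm_num) pi_ne_zero, h4]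
  simp only [← exp_add, ← exp_sub]
  congr 1
  field_simp
  ring

lemma one_add_sub_mul_div_pos {d : ℕ} {p : ℝ} (hp : 0 < p) (hpd : p * ((d : ℝ) - 2) < d) :
    0 < 1 + ((d : ℝ) - d * p) / (2 * p) := by
  rw [one_add_div (by positivity)]
  exact div_pos (by nlinarith) (by positivity)

lemma besselKernel_Lp_const_pos {d : ℕ} {p : ℝ} (hp : 0 < p) (hpd : p * ((d : ℝ) - 2) < d) :
    0 < 2 ^ ((d : ℝ) * (2 / p - 1)) /
        (p ^ ((d : ℝ) / (2 * p)) * π ^ (((d : ℝ) / 2) * (1 - 1 / p))) *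
          Gamma (1 + ((d : ℝ) - d * p) / (2 * p)) := by
  have := Gamma_pos_of_pos (one_add_sub_mul_div_pos hp hpd)
  positivity

lemma ofReal_abs_besselKernel_rpow_le {d : ℕ} {p : ℝ} (hp : 1 ≤ p)
    (x : EuclideanSpace ℝ (Fin d)) :
    ENNReal.ofReal |besselKernel d x| ^ p ≤
      ENNReal.ofReal (1 / (4 * π)) ^ p *
        (∫⁻ s in Ioi (0 : ℝ), ENNReal.ofReal (besselWeight d p s)) ^ (p - 1) *
        ∫⁻ s in Ioi (0 : ℝ), ENNReal.ofReal
          (besselWeight d p s * s ^ (-(d : ℝ) / 2) * exp (-π * ‖x‖ ^ 2 / (4 * s / p))) := by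
  have hp0 : 0 < p := by linarith
  have h := (ofReal_abs_besselKernel_le d x).trans
    (mul_le_mul_right (lintegral_besselIntegrand_le hp x) _)
  refine (ENNReal.rpow_le_rpow h hp0.le).trans_eq ?_
  rw [ENNReal.mul_rpow_of_nonneg _ _ hp0.le, ENNReal.mul_rpow_of_nonneg _ _ hp0.le,
    ← ENNReal.rpow_mul, ← ENNReal.rpow_mul, one_div_mul_cancel hp0.ne', ENNReal.rpow_one,
    sub_mul, one_div_mul_cancel hp0.ne', one_mul]
  ring

lemma lintegral_abs_besselKernel_rpow_le {d : ℕ} {p : ℝ} (hp : 1 ≤ p)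
    (hpd : p * ((d : ℝ) - 2) < d) :
    ∫⁻ x : EuclideanSpace ℝ (Fin d), ENNReal.ofReal (|besselKernel d x| ^ p) ≤
      ENNReal.ofReal ((2 ^ ((d : ℝ) * (2 / p - 1)) /
        (p ^ ((d : ℝ) / (2 * p)) * π ^ (((d : ℝ) / 2) * (1 - 1 / p))) *
          Gamma (1 + ((d : ℝ) - d * p) / (2 * p))) ^ p) := by
  have hp0 : 0 < p := by linarith
  have ha := one_add_sub_mul_div_pos hp0 hpd
  have hM : 0 < (4 * π) ^ (1 + ((d : ℝ) - d * p) / (2 * p)) *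
      Gamma (1 + ((d : ℝ) - d * p) / (2 * p)) := mul_pos (by positivity) (Gamma_pos_of_pos ha)
  simp_rw [← ENNReal.ofReal_rpow_of_nonneg (abs_nonneg _) hp0.le]
  refine (lintegral_mono fun x => ofReal_abs_besselKernel_rpow_le hp x).trans_eq ?_
  rw [lintegral_besselWeight ha, lintegral_const_mul' _ _ (ENNReal.mul_ne_top
      (ENNReal.rpow_ne_top_of_nonneg hp0.le ENNReal.ofReal_ne_top)
      (ENNReal.rpow_ne_top_of_nonneg (by linarith) ENNReal.ofReal_ne_top)),
    lintegral_lintegral_besselWeight_mul_gaussian hp0, lintegral_besselWeight ha,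
    ← besselKernel_Lp_const_eq hp0]
  generalize (4 * π) ^ (1 + ((d : ℝ) - d * p) / (2 * p)) *
    Gamma (1 + ((d : ℝ) - d * p) / (2 * p)) = M at hM ⊢
  rw [ENNReal.ofReal_rpow_of_nonneg (by positivity) hp0.le,
    ENNReal.ofReal_rpow_of_nonneg hM.le (by linarith), ← ENNReal.ofReal_mul (by positivity),
    ← ENNReal.ofReal_mul (by positivity), ← ENNReal.ofReal_mul (by positivity)]
  congr 1
  rw [mul_rpow (by positivity) hM.le, mul_rpow (by positivity) (by positivity),
    ← rpow_mul (by positivity), rpow_sub_one hM.ne']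
  field_simp

theorem bessel_kernel_Lp_bound_general (d : ℕ) (p : ℝ) (hp : 1 ≤ p)
    (hpd : p * ((d : ℝ) - 2) < d) :
    Integrable (fun x : EuclideanSpace ℝ (Fin d) => |besselKernel d x| ^ p) ∧
    (∫ x : EuclideanSpace ℝ (Fin d), |besselKernel d x| ^ p) ^ (1 / p) ≤
      2 ^ ((d : ℝ) * (2 / p - 1)) /
        (p ^ ((d : ℝ) / (2 * p)) * Real.pi ^ (((d : ℝ) / 2) * (1 - 1 / p))) *
        Real.Gamma (1 + ((d : ℝ) - (d : ℝ) * p) / (2 * p)) := by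
  have hp0 : 0 < p := by linarith
  have hC := (besselKernel_Lp_const_pos hp0 hpd).le
  obtain ⟨hint, hle⟩ := integrable_and_integral_le_of_lintegral_ofReal_le
    ((measurable_besselKernel d).abs.pow_const p).aestronglyMeasurable
    (ae_of_all _ fun x => by positivity) (by positivity) (lintegral_abs_besselKernel_rpow_le hp hpd)
  refine ⟨hint, ?_⟩
  calc (∫ x : EuclideanSpace ℝ (Fin d), |besselKernel d x| ^ p) ^ (1 / p)
      ≤ (_ ^ p) ^ (1 / p) := by gcongr
    _ = _ := by rw [← rpow_mul hC, mul_one_div_cancel hp0.ne', rpow_one]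

/-- For `d ≥ 2` and `1 ≤ p < d/(d-2)` (encoded as `p (d-2) < d`, no upper restriction when
`d = 2`), the Bessel potential kernel `G` belongs to `L^p(ℝ^d)` and
`‖G‖_{L^p(ℝ^d)} ≤ (2^{d(2/p-1)} / (p^{d/(2p)} π^{(d/2)(1-1/p)})) Γ(1 + (d - dp)/(2p))`. -/
theorem bessel_kernel_Lp_bound (d : ℕ) (hd : 2 ≤ d) (p : ℝ) (hp : 1 ≤ p)
    (hpd : p * ((d : ℝ) - 2) < d) :
    Integrable (fun x : EuclideanSpace ℝ (Fin d) => |besselKernel d x| ^ p) ∧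
    (∫ x : EuclideanSpace ℝ (Fin d), |besselKernel d x| ^ p) ^ (1 / p) ≤
      2 ^ ((d : ℝ) * (2 / p - 1)) /
        (p ^ ((d : ℝ) / (2 * p)) * Real.pi ^ (((d : ℝ) / 2) * (1 - 1 / p))) *
        Real.Gamma (1 + ((d : ℝ) - (d : ℝ) * p) / (2 * p)) :=
  bessel_kernel_Lp_bound_general d p hp hpd
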